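/- Fix N ≥ 1, let R = ℚ[x_1,...,x_N], and let H(t) = 1 + Σ_{k≥1} h_k t^k ∈ R[[t]]. Define PF_0 = 1 and, for n ≥ 1, PF_n = Σ_{μ ⊢ n} ((n)_{ℓ(μ)−1}/m(μ)!) h_μ ∈ R, and set F(t) = Σ_{n≥0} PF_n t^{n+1} ∈ R[[t]]. Then F(t) = t · H(F(t)). (Equivalently, t·PF(t) is the compositional inverse of the power series t/H(t), where PF(t) = 1 + Σ_{n≥1} PF_n t^n; this is Stanley's generating function identity for the Frobenius characteristics of the parking function modules.) -/

import Mathlib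

/-- Composition `f(g)` of formal power series (substitution of `g` into `f`); this is the
correct composition whenever `g` has zero constant term, since then
`coeff n (g^k) = 0` for `k > n`. -/
noncomputable def psComp {R : Type*} [CommRing R] (f g : PowerSeries R) : PowerSeries R :=
  PowerSeries.mk fun n =>
    ∑ k ∈ Finset.range (n + 1), PowerSeries.coeff k f * PowerSeries.coeff n (g ^ k)

/-- `m(μ)! = m_1!·m_2!⋯` where `m_i` is the multiplicity of `i` in `μ`. -/
def multFact (μ : Multiset ℕ) : ℕ := ∏ i ∈ μ.toFinset, (μ.count i).factorial

/-- The parking function symmetric function: `PF 0 = 1` and, for `n ≥ 1`,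
`PF_n = Σ_{μ ⊢ n} ((n)_{ℓ(μ)-1}/m(μ)!)·h_μ` in `ℚ[x_1,…,x_N]`. -/
noncomputable def PF (N n : ℕ) : MvPolynomial (Fin N) ℚ :=
  if n = 0 then 1 else
    ∑ μ : Nat.Partition n,
      ((n.descFactorial (μ.parts.card - 1) : ℚ) / (multFact μ.parts : ℚ)) •
        (μ.parts.map (MvPolynomial.hsymm (Fin N) ℚ)).prod

namespace PFAux
open PowerSeries Finset
variable {R : Type*} [CommRing R]

theorem coeff_psComp (f g : R⟦X⟧) (n : ℕ) :
    coeff n (psComp f g) = ∑ k ∈ range (n+1), coeff k f * coeff n (g^k) := by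
  simp [psComp]

theorem coeff_XW_pow_zero (W : R⟦X⟧) {m j : ℕ} (h : m < j) :
    coeff m ((X * W)^j) = 0 := by
  rw [mul_pow, coeff_X_pow_mul', if_neg (by omega)]

theorem coeff_XW_pow_mul (W Z : R⟦X⟧) {m j : ℕ} (h : j ≤ m) :
    coeff m ((X * W)^j * Z) = coeff (m - j) (W^j * Z) := by
  rw [mul_pow, mul_assoc, coeff_X_pow_mul', if_pos h]

theorem coeff_psComp_mul (A W Z : R⟦X⟧) (c : ℕ) :
    coeff c (psComp A (X * W) * Z)
      = ∑ j ∈ range (c+1), coeff j A * coeff c ((X * W)^j * Z) := by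
  rw [coeff_mul]
  have h1 : ∀ p ∈ antidiagonal c,
      coeff p.1 (psComp A (X*W)) * coeff p.2 Z
        = ∑ j ∈ range (c+1), coeff j A * (coeff p.1 ((X*W)^j) * coeff p.2 Z) := by
    intro p hp
    have hp' := Finset.HasAntidiagonal.mem_antidiagonal.mp hp
    rw [coeff_psComp, sum_mul]
    rw [Finset.sum_subset (range_subset_range.mpr (by omega : p.1 + 1 ≤ c + 1))]
    · exact sum_congr rfl fun j _ => by ring
    · intro j hj hj'
      simp only [mem_range] at hj hj'
      rw [coeff_XW_pow_zero W (by omega), mul_zero, zero_mul]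
  rw [Finset.sum_congr rfl h1, Finset.sum_comm]
  refine sum_congr rfl fun j _ => ?_
  rw [← mul_sum, coeff_mul]

theorem sum_triangle {M : Type*} [AddCommMonoid M] (c : ℕ) (t : ℕ → ℕ → M)
    (ht : ∀ a b, c < a + b → t a b = 0) :
    ∑ k ∈ range (c+1), ∑ p ∈ antidiagonal k, t p.1 p.2
      = ∑ j ∈ range (c+1), ∑ l ∈ range (c+1), t j l := by
  have hdisj : (↑(range (c+1)) : Set ℕ).PairwiseDisjoint (fun k => antidiagonal k) := by
    intro a _ b _ hab
    simp only [Finset.disjoint_left, Finset.HasAntidiagonal.mem_antidiagonal]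
    intro p hp1 hp2
    exact hab (hp1 ▸ hp2 ▸ rfl)
  rw [← Finset.sum_biUnion hdisj, ← Finset.sum_product']
  have hset : (range (c+1)).biUnion (fun k => antidiagonal k)
      = (range (c+1) ×ˢ range (c+1)).filter (fun p => p.1 + p.2 ≤ c) := by
    ext ⟨a, b⟩
    simp only [mem_biUnion, Finset.HasAntidiagonal.mem_antidiagonal, mem_filter, mem_product, mem_range]
    constructor
    · rintro ⟨k, hk, rfl⟩; omega
    · rintro ⟨⟨_, _⟩, h⟩; exact ⟨a + b, by omega, rfl⟩
  rw [hset, Finset.sum_filter_of_ne]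
  intro p _ hp
  by_contra hc
  exact hp (ht p.1 p.2 (by omega))

theorem psComp_one (G : R⟦X⟧) : psComp 1 G = 1 := by
  ext c
  rw [coeff_psComp, Finset.sum_eq_single 0]
  · simp
  · intro k _ hk0; rw [coeff_one, if_neg hk0, zero_mul]
  · intro h; exact absurd (mem_range.mpr (by omega)) h

theorem psComp_mul (A B W : R⟦X⟧) :
    psComp (A * B) (X * W) = psComp A (X * W) * psComp B (X * W) := by
  ext c
  rw [coeff_psComp, coeff_psComp_mul A W (psComp B (X*W)) c]
  have hrhs : ∀ j ∈ range (c+1),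
      coeff j A * coeff c ((X*W)^j * psComp B (X*W))
        = ∑ l ∈ range (c+1), coeff j A * coeff l B * coeff c ((X*W)^(j+l)) := by
    intro j _
    rw [mul_comm ((X*W)^j), coeff_psComp_mul B W ((X*W)^j) c, mul_sum]
    refine sum_congr rfl fun l _ => ?_
    rw [← pow_add, add_comm l j]
    ring
  rw [Finset.sum_congr rfl hrhs]
  have hlhs : ∀ k ∈ range (c+1), coeff k (A * B) * coeff c ((X*W)^k)
      = ∑ p ∈ antidiagonal k, coeff p.1 A * coeff p.2 B * coeff c ((X*W)^(p.1+p.2)) := by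
    intro k _
    rw [coeff_mul, sum_mul]
    refine sum_congr rfl fun p hp => ?_
    rw [Finset.HasAntidiagonal.mem_antidiagonal.mp hp]
  rw [Finset.sum_congr rfl hlhs]
  exact sum_triangle c (fun a b => coeff a A * coeff b B * coeff c ((X*W)^(a+b)))
    (fun a b h => by rw [coeff_XW_pow_zero W h, mul_zero])

theorem psComp_pow (A W : R⟦X⟧) (k : ℕ) :
    psComp (A^k) (X * W) = (psComp A (X * W))^k := by
  induction k with
  | zero => simpa using psComp_one (X * W)
  | succ k ih => rw [pow_succ, pow_succ, psComp_mul, ih]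

theorem coeff_pow_congr {F1 F2 : R⟦X⟧} {n : ℕ}
    (h : ∀ j ≤ n, coeff j F1 = coeff j F2) (k : ℕ) :
    ∀ c ≤ n, coeff c (F1^k) = coeff c (F2^k) := by
  induction k with
  | zero => intro c _; rfl
  | succ k ih =>
    intro c hc
    rw [pow_succ, pow_succ, coeff_mul, coeff_mul]
    refine sum_congr rfl fun p hp => ?_
    have hm := Finset.HasAntidiagonal.mem_antidiagonal.mp hp
    rw [ih p.1 (by omega), h p.2 (by omega)]

theorem coeff_comp_congr {H F1 F2 : R⟦X⟧} {n : ℕ}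
    (h : ∀ j ≤ n, coeff j F1 = coeff j F2) :
    ∀ j ≤ n + 1, coeff j (X * psComp H F1) = coeff j (X * psComp H F2) := by
  intro j hj
  cases j with
  | zero => simp [coeff_zero_eq_constantCoeff]
  | succ m =>
    rw [coeff_succ_X_mul, coeff_succ_X_mul, coeff_psComp, coeff_psComp]
    exact sum_congr rfl fun k _ => by rw [coeff_pow_congr h k m (by omega)]

noncomputable def seq (H : R⟦X⟧) : ℕ → R⟦X⟧
  | 0 => 0
  | n+1 => X * psComp H (seq H n)

theorem seq_stable (H : R⟦X⟧) : ∀ i, ∀ j ≤ i, coeff j (seq H i) = coeff j (seq H j) := by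
  intro i
  induction i using Nat.strong_induction_on with
  | _ i IH =>
    intro j hj
    rcases Nat.eq_or_lt_of_le hj with rfl | hji
    · rfl
    · obtain ⟨i', rfl⟩ : ∃ i', i = i' + 1 := ⟨i - 1, by omega⟩
      have hstep : coeff j (seq H (i'+1)) = coeff j (seq H i') := by
        cases i' with
        | zero =>
          interval_cases j
          simp [seq, coeff_zero_eq_constantCoeff]
        | succ m =>
          show coeff j (X * psComp H (seq H (m+1))) = coeff j (X * psComp H (seq H m))
          refine coeff_comp_congr (n := m) (fun c hc => ?_) j (by omega)
          rw [IH (m+1) (by omega) c (by omega), IH m (by omega) c (by omega)]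
      rw [hstep, IH i' (by omega) j (by omega)]

noncomputable def Gser (H : R⟦X⟧) : R⟦X⟧ := mk fun n => coeff n (seq H n)

theorem coeff_Gser_eq_seq (H : R⟦X⟧) {i j : ℕ} (h : j ≤ i) :
    coeff j (Gser H) = coeff j (seq H i) := by
  rw [Gser, coeff_mk, seq_stable H i j h]

theorem coeff_zero_Gser (H : R⟦X⟧) : coeff 0 (Gser H) = 0 := by
  rw [Gser, coeff_mk]; simp [seq]

theorem Gser_eq (H : R⟦X⟧) : Gser H = X * psComp H (Gser H) := by
  ext n
  have h1 : coeff n (X * psComp H (Gser H)) = coeff n (X * psComp H (seq H n)) :=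
    coeff_comp_congr (fun j hj => coeff_Gser_eq_seq H hj) n (by omega)
  rw [h1]
  show coeff n (Gser H) = coeff n (seq H (n+1))
  exact coeff_Gser_eq_seq H (by omega)

section Rat
variable {R : Type*} [CommRing R] [Algebra ℚ R]

theorem nsmul_cancel {s : ℕ} (hs : s ≠ 0) {x y : R} (h : s • x = s • y) : x = y := by
  have h' : (s : ℚ) • x = (s : ℚ) • y := by
    rw [Nat.cast_smul_eq_nsmul, Nat.cast_smul_eq_nsmul]; exact h
  exact smul_right_injective R (show (s:ℚ) ≠ 0 by exact_mod_cast hs) h'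

theorem residue_key (u : R⟦X⟧ˣ) (s : ℕ) :
    coeff s ((↑u⁻¹ : R⟦X⟧)^(s+1) * ((↑u : R⟦X⟧) + X * d⁄dX R ↑u))
      = if s = 0 then 1 else 0 := by
  rcases Nat.eq_zero_or_pos s with rfl | hs
  · simp only [if_pos rfl, pow_one, mul_add, map_add, coeff_zero_eq_constantCoeff, map_mul]
    rw [← map_mul]
    simp [Units.inv_mul]
  · rw [if_neg (by omega)]
    obtain ⟨k, rfl⟩ : ∃ k, s = k + 1 := ⟨s - 1, by omega⟩
    set W : R⟦X⟧ := ↑u with hW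
    set V : R⟦X⟧ := ↑u⁻¹ with hV
    have hpow : V^(k+1+1) * W = V^(k+1) := by
      rw [hW, hV, ← Units.val_pow_eq_pow_val, ← Units.val_mul, ← Units.val_pow_eq_pow_val]
      congr 1
      rw [pow_succ, mul_assoc, inv_mul_cancel, mul_one]
    have hD : (k+1) • (V^(k+1+1) * d⁄dX R W) = -(d⁄dX R (V^(k+1))) := by
      have h1 : d⁄dX R (V^(k+1)) = (k+1) • V^(k+1-1) • d⁄dX R V :=
        Derivation.leibniz_pow (D := d⁄dX R) (a := V) (k+1)
      have h2 : V^(k+1-1) • d⁄dX R V = -(V^(k+1+1) * d⁄dX R W) := by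
        rw [smul_eq_mul, hV, derivative_inv u, ← hV, ← hW, Nat.add_sub_cancel]
        ring
      rw [h1, h2, smul_neg, neg_neg]
    rw [mul_add, map_add, hpow, mul_left_comm, coeff_succ_X_mul]
    refine nsmul_cancel (s := k+1) (by omega) ?_
    rw [smul_zero, smul_add]
    rw [show (k+1) • coeff k (V^(k+1+1) * d⁄dX R W)
        = coeff k ((k+1) • (V^(k+1+1) * d⁄dX R W)) from (map_nsmul _ _ _).symm]
    rw [hD, map_neg, coeff_derivative, nsmul_eq_mul]
    push_cast
    ring

theorem lagrange (H : R⟦X⟧) (hH1 : constantCoeff H = 1) (n : ℕ) :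
    coeff n (H^(n+1)) = (n+1) • coeff (n+1) (Gser H) := by
  set W : R⟦X⟧ := psComp H (Gser H) with hWdef
  have hG : Gser H = X * W := Gser_eq H
  have hW0 : constantCoeff W = 1 := by
    have : coeff 0 W = 1 := by
      rw [hWdef, coeff_psComp]
      simp [hH1, coeff_zero_eq_constantCoeff]
    rwa [coeff_zero_eq_constantCoeff] at this
  have hu : IsUnit W := by rw [isUnit_iff_constantCoeff, hW0]; exact isUnit_one
  obtain ⟨u, hu1⟩ := hu
  -- the expression E
  set DG : R⟦X⟧ := d⁄dX R (Gser H) with hDG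
  have hDG2 : DG = (↑u : R⟦X⟧) + X * d⁄dX R ↑u := by
    rw [hDG, hG, Derivation.leibniz, derivative_X, smul_eq_mul, smul_eq_mul, mul_one, hu1]
    ring
  set Z : R⟦X⟧ := (↑u⁻¹ : R⟦X⟧)^(n+1) * DG with hZ
  have wayA : psComp (H^(n+1)) (X * W) * Z = DG := by
    rw [psComp_pow, ← hG, ← hWdef, ← hu1, hZ]
    rw [show ((↑u : R⟦X⟧)^(n+1) * ((↑u⁻¹ : R⟦X⟧)^(n+1) * DG)) = 
      ((↑u : R⟦X⟧)^(n+1) * (↑u⁻¹ : R⟦X⟧)^(n+1)) * DG from by ring]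
    rw [← Units.val_pow_eq_pow_val, ← Units.val_pow_eq_pow_val, ← Units.val_mul, ← mul_pow,
      mul_inv_cancel, one_pow, Units.val_one, one_mul]
  have hterm : ∀ j ∈ range (n+1),
      coeff j (H^(n+1)) * coeff n ((X*W)^j * Z) = if j = n then coeff n (H^(n+1)) else 0 := by
    intro j hj
    have hjn : j ≤ n := by have := mem_range.mp hj; omega
    rw [coeff_XW_pow_mul W Z hjn, hZ]
    rw [show W^j * ((↑u⁻¹ : R⟦X⟧)^(n+1) * DG) = ((↑u:R⟦X⟧)^j * (↑u⁻¹ : R⟦X⟧)^(n+1)) * DG from by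
      rw [← hu1]; ring]
    have hun : (↑u:R⟦X⟧)^j * (↑u⁻¹ : R⟦X⟧)^(n+1) = (↑u⁻¹ : R⟦X⟧)^((n-j)+1) := by
      rw [← Units.val_pow_eq_pow_val, ← Units.val_pow_eq_pow_val, ← Units.val_mul,
        ← Units.val_pow_eq_pow_val]
      congr 1
      rw [show n + 1 = j + ((n-j)+1) by omega, pow_add, ← mul_assoc, ← mul_pow,
        mul_inv_cancel, one_pow, one_mul]
    rw [hun, hDG2, residue_key u (n-j)]
    rcases eq_or_ne j n with rfl | hne
    · rw [if_pos rfl, if_pos (by omega : j - j = 0), mul_one]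
    · rw [if_neg (by omega : ¬ (n - j = 0)), if_neg hne, mul_zero]
  have wayB : coeff n (psComp (H^(n+1)) (X * W) * Z) = coeff n (H^(n+1)) := by
    rw [coeff_psComp_mul, Finset.sum_congr rfl hterm, Finset.sum_ite_eq' (range (n+1)) n
      (fun _ => coeff n (H^(n+1))), if_pos (mem_range.mpr (by omega))]
  calc coeff n (H^(n+1)) = coeff n (psComp (H^(n+1)) (X * W) * Z) := wayB.symm
    _ = coeff n DG := by rw [wayA]
    _ = coeff (n+1) (Gser H) * (n+1) := coeff_derivative _ _
    _ = (n+1) • coeff (n+1) (Gser H) := by rw [nsmul_eq_mul]; push_cast; ring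

end Rat

theorem multFact_zero : multFact 0 = 1 := by simp [multFact]

theorem multFact_erase {M : Multiset ℕ} {a : ℕ} (ha : a ∈ M) :
    M.count a * multFact (M.erase a) = multFact M := by
  have hsub : (M.erase a).toFinset ⊆ M.toFinset :=
    Multiset.toFinset_subset.mpr (fun x hx => Multiset.mem_of_mem_erase hx)
  have h1 : multFact (M.erase a) = ∏ i ∈ M.toFinset, ((M.erase a).count i).factorial := by
    rw [multFact]
    refine Finset.prod_subset hsub (fun x hx hx' => ?_)
    have hz : Multiset.count x (M.erase a) = 0 :=
      Multiset.count_eq_zero.mpr (fun hmem => hx' (Multiset.mem_toFinset.mpr hmem))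
    rw [hz]; rfl
  calc M.count a * multFact (M.erase a)
      = M.count a * (((M.erase a).count a).factorial
          * ∏ i ∈ M.toFinset.erase a, ((M.erase a).count i).factorial) := by
        rw [h1, ← Finset.mul_prod_erase _ _ (Multiset.mem_toFinset.mpr ha)]
    _ = (M.count a).factorial * ∏ i ∈ M.toFinset.erase a, (M.count i).factorial := by
        rw [← mul_assoc, Multiset.count_erase_self,
          Nat.mul_factorial_pred (Multiset.count_pos.mpr ha).ne']
        congr 1
        refine Finset.prod_congr rfl (fun x hx => ?_)
        rw [Multiset.count_erase_of_ne (Finset.mem_erase.mp hx).1]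
    _ = multFact M := Finset.mul_prod_erase M.toFinset (fun i => (M.count i).factorial) (Multiset.mem_toFinset.mpr ha)

theorem descFactorial_rec (c ℓ : ℕ) :
    (c+1).descFactorial ℓ = c.descFactorial ℓ + ℓ * c.descFactorial (ℓ - 1) := by
  cases ℓ with
  | zero => simp
  | succ k =>
    rw [Nat.succ_descFactorial_succ, Nat.descFactorial_succ, Nat.add_sub_cancel]
    rcases le_or_gt k c with h | h
    · have : c + 1 = (c - k) + (k + 1) := by omega
      rw [this, add_mul]
    · rw [Nat.descFactorial_eq_zero_iff_lt.mpr h]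
      have : c - k = 0 := by omega
      rw [this]
      ring

noncomputable def fiberCount (s : Finset ℕ) (M : Multiset ℕ) : ℕ :=
  ((Finset.finsuppAntidiag s M.sum).filter (fun f => f.support.val.map ⇑f = M)).card

namespace CNT
open Finset

private noncomputable def B (t : Finset ℕ) (K : Multiset ℕ) : Finset (ℕ →₀ ℕ) :=
  (Finset.finsuppAntidiag t K.sum).filter (fun f => f.support.val.map ⇑f = K)

theorem mem_B {t : Finset ℕ} {K : Multiset ℕ} {f : ℕ →₀ ℕ} :
    f ∈ B t K ↔ (∑ j ∈ t, f j = K.sum ∧ f.support ⊆ t) ∧ f.support.val.map ⇑f = K := by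
  rw [B, Finset.mem_filter, Finset.mem_finsuppAntidiag]

theorem fiberCount_eq_cardB (s : Finset ℕ) (M : Multiset ℕ) :
    fiberCount s M = (B s M).card := rfl

theorem card_B_cons {i : ℕ} {s : Finset ℕ} (hi : i ∉ s) (M : Multiset ℕ)
    (hM : (0:ℕ) ∉ M) :
    (B (cons i s hi) M).card = (B s M).card + ∑ a ∈ M.toFinset, (B s (M.erase a)).card := by
  classical
  have hmaps : ∀ f ∈ B (cons i s hi) M, f i ∈ insert 0 M.toFinset := by
    intro f hf
    obtain ⟨⟨hsum, hsupp⟩, hmap⟩ := mem_B.mp hf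
    rcases eq_or_ne (f i) 0 with h0 | h0
    · rw [h0]; exact mem_insert_self _ _
    · refine mem_insert_of_mem (Multiset.mem_toFinset.mpr ?_)
      rw [← hmap]
      exact Multiset.mem_map_of_mem _ (by simpa [Finsupp.mem_support_iff] using h0)
  rw [Finset.card_eq_sum_card_fiberwise hmaps, Finset.sum_insert (by simp [hM])]
  congr 1
  · -- fiber at 0 equals B s M
    congr 1
    ext f
    simp only [Finset.mem_filter, mem_B]
    constructor
    · rintro ⟨⟨⟨hsum, hsupp⟩, hmap⟩, hfi⟩
      have hsupp' : f.support ⊆ s := by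
        intro x hx
        rcases Finset.mem_cons.mp (hsupp hx) with rfl | h
        · exact absurd hfi (Finsupp.mem_support_iff.mp hx)
        · exact h
      refine ⟨⟨?_, hsupp'⟩, hmap⟩
      rw [Finset.sum_cons, hfi, zero_add] at hsum
      exact hsum
    · rintro ⟨⟨hsum, hsupp⟩, hmap⟩
      have hfi : f i = 0 := Finsupp.notMem_support_iff.mp (fun h => hi (hsupp h))
      exact ⟨⟨⟨by rw [Finset.sum_cons, hfi, zero_add]; exact hsum,
        hsupp.trans (Finset.subset_cons hi)⟩, hmap⟩, hfi⟩
  · -- fibers at a ∈ M.toFinset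
    refine Finset.sum_congr rfl (fun a ha => ?_)
    have haM : a ∈ M := Multiset.mem_toFinset.mp ha
    have ha0 : a ≠ 0 := fun h => hM (h ▸ haM)
    have hsumM : a + (M.erase a).sum = M.sum := by
      conv_rhs => rw [← Multiset.cons_erase haM]
      rw [Multiset.sum_cons]
    refine Finset.card_bij' (fun f _ => f.erase i) (fun g _ => g + Finsupp.single i a)
      ?_ ?_ ?_ ?_
    · -- maps forward
      rintro f hf
      beta_reduce
      rw [Finset.mem_filter] at hf
      obtain ⟨hfB, hfi⟩ := hf
      obtain ⟨⟨hsum, hsupp⟩, hmap⟩ := mem_B.mp hfB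
      have hiS : i ∈ f.support := Finsupp.mem_support_iff.mpr (by rw [hfi]; exact ha0)
      refine mem_B.mpr ⟨⟨?_, ?_⟩, ?_⟩
      · have h1 : ∑ j ∈ s, (f.erase i) j = ∑ j ∈ s, f j := by
          refine Finset.sum_congr rfl (fun j hj => ?_)
          exact Finsupp.erase_ne (fun h => hi (h ▸ hj))
        rw [Finset.sum_cons, hfi] at hsum
        rw [h1]
        omega
      · rw [Finsupp.support_erase]
        intro x hx
        obtain ⟨hxi, hxs⟩ := Finset.mem_erase.mp hx
        rcases Finset.mem_cons.mp (hsupp hxs) with rfl | h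
        · exact absurd rfl hxi
        · exact h
      · rw [Finsupp.support_erase, Finset.erase_val]
        have hcongr : Multiset.map (⇑(f.erase i)) (f.support.val.erase i)
            = Multiset.map ⇑f (f.support.val.erase i) := by
          refine Multiset.map_congr rfl (fun x hx => ?_)
          have hxi : x ≠ i := by
            have hnd : f.support.val.Nodup := f.support.nodup
            exact (hnd.mem_erase_iff.mp hx).1
          exact Finsupp.erase_ne hxi
        rw [hcongr, Multiset.map_erase_of_mem _ _ (Finset.mem_def.mp hiS),
          hmap, hfi]
    · -- maps backward
      rintro g hg
      beta_reduce
      obtain ⟨⟨hsum, hsupp⟩, hmap⟩ := mem_B.mp hg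
      have hgi : g i = 0 := Finsupp.notMem_support_iff.mp (fun h => hi (hsupp h))
      have hsing : (Finsupp.single i a).support = {i} := Finsupp.support_single_ne_zero i ha0
      have hdisj : Disjoint g.support (Finsupp.single i a).support := by
        rw [hsing]
        simp only [Finset.disjoint_singleton_right]
        exact fun h => hi (hsupp h)
      have hsuppadd : (g + Finsupp.single i a).support = insert i g.support := by
        rw [Finsupp.support_add_eq hdisj, hsing, Finset.union_comm, ← Finset.insert_eq]
      rw [Finset.mem_filter]
      constructor
      · refine mem_B.mpr ⟨⟨?_, ?_⟩, ?_⟩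
        · rw [Finset.sum_cons]
          have h1 : ∑ j ∈ s, (g + Finsupp.single i a) j = ∑ j ∈ s, g j := by
            refine Finset.sum_congr rfl (fun j hj => ?_)
            have : Finsupp.single i a j = 0 := Finsupp.single_eq_of_ne' (fun h => hi (h ▸ hj))
            simp [this]
          rw [h1, Finsupp.add_apply, hgi, Finsupp.single_eq_same, zero_add, hsum, hsumM]
        · rw [hsuppadd]
          intro x hx
          rcases Finset.mem_insert.mp hx with rfl | h
          · exact Finset.mem_cons_self _ _
          · exact Finset.subset_cons hi (hsupp h)
        · rw [hsuppadd, Finset.insert_val_of_notMem (fun h => hi (hsupp h)),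
            Multiset.map_cons]
          have hcongr : Multiset.map (⇑(g + Finsupp.single i a)) g.support.val
              = Multiset.map ⇑g g.support.val := by
            refine Multiset.map_congr rfl (fun x hx => ?_)
            have hxi : x ≠ i := fun h => hi (hsupp (h ▸ (Finset.mem_def.mpr hx)))
            have : Finsupp.single i a x = 0 := Finsupp.single_eq_of_ne' (Ne.symm hxi)
            simp [this]
          rw [hcongr, hmap, Finsupp.add_apply, hgi, Finsupp.single_eq_same, zero_add,
            Multiset.cons_erase haM]
      · rw [Finsupp.add_apply, hgi, Finsupp.single_eq_same, zero_add]
    · -- left inverse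
      intro f hf
      beta_reduce
      have hfi : f i = a := (Finset.mem_filter.mp hf).2
      rw [add_comm, ← hfi]
      exact Finsupp.single_add_erase i f
    · -- right inverse
      intro g hg
      beta_reduce
      obtain ⟨⟨hsum, hsupp⟩, hmap⟩ := mem_B.mp hg
      have hgi : g i = 0 := Finsupp.notMem_support_iff.mp (fun h => hi (hsupp h))
      ext x
      rcases eq_or_ne x i with rfl | hxi
      · rw [Finsupp.erase_same, hgi]
      · rw [Finsupp.erase_ne hxi, Finsupp.add_apply,
          Finsupp.single_eq_of_ne' (Ne.symm hxi), add_zero]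

theorem fiberCount_mul_multFact :
    ∀ (s : Finset ℕ) (M : Multiset ℕ), (0:ℕ) ∉ M →
      fiberCount s M * multFact M = s.card.descFactorial (Multiset.card M) := by
  intro s
  induction s using Finset.cons_induction with
  | empty =>
    intro M hM
    rcases eq_or_ne M 0 with rfl | hM0
    · rw [multFact_zero, mul_one]
      rw [fiberCount_eq_cardB]
      rw [show B ∅ (0 : Multiset ℕ) = {0} from ?_]
      · simp
      · ext f
        rw [mem_B]
        simp only [Finset.sum_empty, Multiset.sum_zero, Finset.subset_empty,
          Finsupp.support_eq_empty, Finset.mem_singleton]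
        constructor
        · rintro ⟨⟨-, rfl⟩, -⟩; rfl
        · rintro rfl; simp
    · have hsum : M.sum ≠ 0 := by
        intro h
        obtain ⟨a, haM⟩ := Multiset.exists_mem_of_ne_zero hM0
        have := Multiset.sum_eq_zero_iff.mp h a haM
        exact hM (this ▸ haM)
      rw [fiberCount_eq_cardB, B, Finset.finsuppAntidiag_empty_of_ne_zero hsum]
      simp only [Finset.filter_empty, Finset.card_empty, zero_mul, Finset.card_empty]
      have : Multiset.card M ≠ 0 := by
        simpa [Multiset.card_eq_zero] using hM0
      obtain ⟨k, hk⟩ := Nat.exists_eq_succ_of_ne_zero this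
      rw [hk, Nat.zero_descFactorial_succ]
  | cons i s hi IH =>
    intro M hM
    rw [fiberCount_eq_cardB, card_B_cons hi M hM, Finset.card_cons, add_mul,
      descFactorial_rec, Finset.sum_mul]
    congr 1
    · exact IH M hM
    · have hterm : ∀ a ∈ M.toFinset,
          (B s (M.erase a)).card * multFact M
            = M.count a * (s.card.descFactorial (Multiset.card M - 1)) := by
        intro a ha
        have haM : a ∈ M := Multiset.mem_toFinset.mp ha
        have h0 : (0:ℕ) ∉ M.erase a := fun h => hM (Multiset.mem_of_mem_erase h)
        rw [← multFact_erase haM, ← mul_assoc, mul_comm _ (M.count a), mul_assoc,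
          ← fiberCount_eq_cardB, IH _ h0, Multiset.card_erase_of_mem haM]
        rfl
      rw [Finset.sum_congr rfl hterm, ← Finset.sum_mul, Multiset.toFinset_sum_count_eq]
  end CNT

noncomputable def pa (n : ℕ) (l : ℕ →₀ ℕ) : Nat.Partition n :=
  if h : (l.support.val.map ⇑l).sum = n then
    { parts := l.support.val.map ⇑l,
      parts_pos := fun {i} hi => by
        obtain ⟨j, hj, rfl⟩ := Multiset.mem_map.mp hi
        exact Nat.pos_of_ne_zero (Finsupp.mem_support_iff.mp hj),
      parts_sum := h }
  else default

theorem pa_parts {n : ℕ} {l : ℕ →₀ ℕ} (h : (l.support.val.map ⇑l).sum = n) :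
    (pa n l).parts = l.support.val.map ⇑l := by rw [pa, dif_pos h]

theorem coeff_pow_partition {R : Type*} [CommRing R] (H : R⟦X⟧) (x : ℕ → R)
    (hH : ∀ k, coeff k H = if k = 0 then 1 else x k) (n : ℕ) :
    coeff n (H^(n+1))
      = ∑ μ : Nat.Partition n, fiberCount (range (n+1)) μ.parts • (μ.parts.map x).prod := by
  classical
  rw [PowerSeries.coeff_pow]
  set T := Finset.finsuppAntidiag (range (n+1)) n with hT
  have hΦsum : ∀ l ∈ T, (l.support.val.map ⇑l).sum = n := by
    intro l hl
    obtain ⟨hsum, hsupp⟩ := Finset.mem_finsuppAntidiag.mp hl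
    have h0 : (l.support.val.map ⇑l).sum = ∑ j ∈ l.support, l j := rfl
    rw [h0, Finset.sum_subset hsupp (fun j _ hj => Finsupp.notMem_support_iff.mp hj)]
    exact hsum
  rw [← Finset.sum_fiberwise_of_maps_to (g := pa n) (t := univ) (fun l _ => mem_univ _)]
  refine Finset.sum_congr rfl (fun μ _ => ?_)
  have hfib : T.filter (fun l => pa n l = μ)
      = (Finset.finsuppAntidiag (range (n+1)) μ.parts.sum).filter
          (fun l => l.support.val.map ⇑l = μ.parts) := by
    rw [μ.parts_sum]
    ext l
    simp only [Finset.mem_filter]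
    constructor
    · rintro ⟨hl, rfl⟩
      exact ⟨hl, (pa_parts (hΦsum l hl)).symm⟩
    · rintro ⟨hl, hmap⟩
      refine ⟨hl, Nat.Partition.ext ?_⟩
      rw [pa_parts (hΦsum l hl), hmap]
  calc ∑ l ∈ T.filter (fun l => pa n l = μ), ∏ i ∈ range (n+1), coeff (l i) H
      = ∑ _l ∈ T.filter (fun l => pa n l = μ), (μ.parts.map x).prod := by
        refine Finset.sum_congr rfl (fun l hl => ?_)
        obtain ⟨hlT, hpa⟩ := Finset.mem_filter.mp hl
        obtain ⟨hsum, hsupp⟩ := Finset.mem_finsuppAntidiag.mp hlT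
        have h1 : ∏ i ∈ range (n+1), coeff (l i) H = ∏ j ∈ l.support, coeff (l j) H :=
          (Finset.prod_subset hsupp (fun j _ hj => by
            rw [hH, if_pos (Finsupp.notMem_support_iff.mp hj)])).symm
        rw [h1, Finset.prod_congr rfl (fun j hj => by
          rw [hH, if_neg (Finsupp.mem_support_iff.mp hj)])]
        have h2 : μ.parts = l.support.val.map ⇑l := by rw [← hpa, pa_parts (hΦsum l hlT)]
        rw [h2, Multiset.map_map]
        rfl
    _ = fiberCount (range (n+1)) μ.parts • (μ.parts.map x).prod := by
        rw [Finset.sum_const, hfib]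
        rfl

end PFAux

/-- Stanley's generating function identity: with `H(t) = 1 + Σ_{k≥1} h_k t^k` and
`F(t) = Σ_{n≥0} PF_n t^{n+1}`, one has `F(t) = t·H(F(t))`, i.e. `t·PF(t)` is the
compositional inverse of `t/H(t)`. -/
theorem PF_genfun (N : ℕ) (hN : 1 ≤ N)
    (H F : PowerSeries (MvPolynomial (Fin N) ℚ))
    (hH : ∀ k, PowerSeries.coeff k H =
      if k = 0 then 1 else MvPolynomial.hsymm (Fin N) ℚ k)
    (hF : ∀ m, PowerSeries.coeff m F = if m = 0 then 0 else PF N (m - 1)) :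
    F = PowerSeries.X * psComp H F := by
  classical
  have hH1 : PowerSeries.constantCoeff H = 1 := by
    rw [← PowerSeries.coeff_zero_eq_constantCoeff, hH 0, if_pos rfl]
  have hPF : ∀ n : ℕ, PF N n = ∑ μ : Nat.Partition n,
      ((n.descFactorial (μ.parts.card - 1) : ℚ) / (multFact μ.parts : ℚ)) •
        (μ.parts.map (MvPolynomial.hsymm (Fin N) ℚ)).prod := by
    intro n
    rcases eq_or_ne n 0 with rfl | hn
    · rw [PF, if_pos rfl, Finset.univ_unique, Finset.sum_singleton]
      simp [Nat.Partition.partition_zero_parts, PFAux.multFact_zero]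
    · rw [PF, if_neg hn]
  have hFG : F = PFAux.Gser H := by
    refine PowerSeries.ext fun m => ?_
    cases m with
    | zero => rw [hF 0, if_pos rfl, PFAux.coeff_zero_Gser]
    | succ n =>
      rw [hF (n+1), if_neg (Nat.succ_ne_zero n), Nat.add_sub_cancel]
      refine PFAux.nsmul_cancel (Nat.succ_ne_zero n) ?_
      rw [← PFAux.lagrange H hH1 n,
        PFAux.coeff_pow_partition H (MvPolynomial.hsymm (Fin N) ℚ) hH n, hPF n,
        Finset.smul_sum]
      refine Finset.sum_congr rfl (fun μ _ => ?_)
      have h0M : (0:ℕ) ∉ μ.parts := fun h => (μ.parts_pos h).ne' rfl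
      have hcnt := PFAux.CNT.fiberCount_mul_multFact (Finset.range (n+1)) μ.parts h0M
      rw [Finset.card_range] at hcnt
      have hdesc : (n+1) * n.descFactorial (Multiset.card μ.parts - 1)
          = (n+1).descFactorial (Multiset.card μ.parts) := by
        rcases Nat.eq_zero_or_pos (Multiset.card μ.parts) with hc | hc
        · have hn0 : n = 0 := by
            rw [← μ.parts_sum, Multiset.card_eq_zero.mp hc]; rfl
          rw [hc, hn0]; rfl
        · obtain ⟨k, hk⟩ := Nat.exists_eq_succ_of_ne_zero (Nat.pos_iff_ne_zero.mp hc)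
          rw [hk, Nat.succ_sub_one, Nat.succ_descFactorial_succ]
      rw [← Nat.cast_smul_eq_nsmul ℚ (n+1), ← Nat.cast_smul_eq_nsmul ℚ
        (PFAux.fiberCount (Finset.range (n+1)) μ.parts), smul_smul]
      congr 1
      have hcast : ((PFAux.fiberCount (Finset.range (n+1)) μ.parts : ℚ))
            * ((multFact μ.parts : ℚ))
          = ((n:ℚ)+1) * ((n.descFactorial (Multiset.card μ.parts - 1) : ℚ)) := by
        have := congrArg (fun t : ℕ => (t : ℚ)) (hcnt.trans hdesc.symm)
        push_cast at this
        convert this using 2 <;> push_cast <;> ring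
      have hmf : (multFact μ.parts : ℚ) ≠ 0 := by
        exact_mod_cast Finset.prod_ne_zero_iff.mpr (fun i _ => Nat.factorial_ne_zero _)
      field_simp
      push_cast
      linarith [hcast]
  rw [hFG]
  exact PFAux.Gser_eq H
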